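/- Generalized Pythagoras' inequality for Bregman projections: if Ω ⊆ X is convex and closed in X, q ∈ X, and P_Ω(q) = argmin_{ω∈Ω} D_F(ω‖q) is the Bregman projection of q onto Ω, then for every p ∈ Ω, D_F(p‖q) ≥ D_F(p‖P_Ω(q)) + D_F(P_Ω(q)‖q). -/

import Mathlib

/-!
At the projection `P = P_Ω(q)` the function `ω ↦ D_F(ω‖q)` is minimal on the convex set `Ω`, so
its gradient `∇F(P) - ∇F(q)` has nonnegative inner product with every direction `p - P`,
`p ∈ Ω`. The three-point identity
`D_F(p‖q) = D_F(p‖P) + D_F(P‖q) + ⟪p - P, ∇F(P) - ∇F(q)⟫` turns this into the inequality.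
-/

open scoped RealInnerProductSpace

/-- Bregman divergence of a generator `F` with gradient map `F'`. -/
noncomputable def bregman {d : ℕ}
    (F : EuclideanSpace ℝ (Fin d) → ℝ)
    (F' : EuclideanSpace ℝ (Fin d) → EuclideanSpace ℝ (Fin d))
    (p q : EuclideanSpace ℝ (Fin d)) : ℝ :=
  F p - F q - ⟪p - q, F' q⟫

theorem IsMinOn.inner_sub_gradient_nonneg {E : Type*} [NormedAddCommGroup E]
    [InnerProductSpace ℝ E] [CompleteSpace E] {f : E → ℝ} {g : E} {s : Set E} {a x : E}
    (hmin : IsMinOn f s a) (hf : HasGradientAt f g a) (hs : Convex ℝ s) (ha : a ∈ s)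
    (hx : x ∈ s) : 0 ≤ ⟪x - a, g⟫ := by
  rw [real_inner_comm]
  exact hmin.localize.hasFDerivWithinAt_nonneg hf.hasFDerivAt.hasFDerivWithinAt
    (sub_mem_posTangentConeAt_of_segment_subset (hs.segment_subset ha hx))

section Bregman

variable {d : ℕ} {F : EuclideanSpace ℝ (Fin d) → ℝ}
  {F' : EuclideanSpace ℝ (Fin d) → EuclideanSpace ℝ (Fin d)}

theorem bregman_three_point (p q r : EuclideanSpace ℝ (Fin d)) :
    bregman F F' p q = bregman F F' p r + bregman F F' r q + ⟪p - r, F' r - F' q⟫ := by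
  have hpq : p - q = (p - r) + (r - q) := by abel
  simp only [bregman, hpq, inner_add_left, inner_sub_right]
  ring

theorem hasGradientAt_bregman_left {q r : EuclideanSpace ℝ (Fin d)}
    (hF : HasGradientAt F (F' r) r) :
    HasGradientAt (fun p => bregman F F' p q) (F' r - F' q) r := by
  let D := InnerProductSpace.toDual ℝ (EuclideanSpace ℝ (Fin d))
  have hlin : HasFDerivAt (fun p => ⟪p - q, F' q⟫) (D (F' q)) r := by
    have hD : (fun p => ⟪p - q, F' q⟫) = fun p => D (F' q) p - D (F' q) q := by
      ext p
      simp only [D, InnerProductSpace.toDual_apply_apply, inner_sub_left, real_inner_comm]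
    exact hD ▸ (D (F' q)).hasFDerivAt.sub_const _
  rw [hasGradientAt_iff_hasFDerivAt, map_sub]
  exact ((hasGradientAt_iff_hasFDerivAt.mp hF).sub_const (F q)).sub hlin

end Bregman

theorem bregman_pythagoras_general {d : ℕ}
    {X : Set (EuclideanSpace ℝ (Fin d))}
    {F : EuclideanSpace ℝ (Fin d) → ℝ}
    {F' : EuclideanSpace ℝ (Fin d) → EuclideanSpace ℝ (Fin d)}
    (hF' : ∀ x ∈ X, HasGradientAt F (F' x) x)
    {Ω : Set (EuclideanSpace ℝ (Fin d))} (hΩX : Ω ⊆ X)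
    (hΩconv : Convex ℝ Ω)
    {q : EuclideanSpace ℝ (Fin d)}
    {proj : EuclideanSpace ℝ (Fin d)} (hproj : proj ∈ Ω)
    (hmin : ∀ ω ∈ Ω, bregman F F' proj q ≤ bregman F F' ω q) :
    ∀ p ∈ Ω, bregman F F' p proj + bregman F F' proj q ≤ bregman F F' p q := by
  intro p hp
  have hopt : 0 ≤ ⟪p - proj, F' proj - F' q⟫ :=
    (isMinOn_iff.mpr hmin).inner_sub_gradient_nonneg
      (hasGradientAt_bregman_left (hF' proj (hΩX hproj))) hΩconv hproj hp
  linarith [bregman_three_point (F := F) (F' := F') p q proj]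

/-- Generalized Pythagoras' inequality for Bregman projections onto a convex set
`Ω`, closed in `X`: `D_F(p‖q) ≥ D_F(p‖P_Ω(q)) + D_F(P_Ω(q)‖q)` for all `p ∈ Ω`. -/
theorem bregman_pythagoras {d : ℕ}
    {X : Set (EuclideanSpace ℝ (Fin d))} (hXopen : IsOpen X) (hXconv : Convex ℝ X)
    {F : EuclideanSpace ℝ (Fin d) → ℝ}
    {F' : EuclideanSpace ℝ (Fin d) → EuclideanSpace ℝ (Fin d)}
    (hF : StrictConvexOn ℝ X F)
    (hF' : ∀ x ∈ X, HasGradientAt F (F' x) x)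
    {Ω : Set (EuclideanSpace ℝ (Fin d))} (hΩX : Ω ⊆ X)
    (hΩne : Ω.Nonempty) (hΩconv : Convex ℝ Ω)
    (hΩclosed : IsClosed ((↑·) ⁻¹' Ω : Set X))
    {q : EuclideanSpace ℝ (Fin d)} (hq : q ∈ X)
    {proj : EuclideanSpace ℝ (Fin d)} (hproj : proj ∈ Ω)
    (hmin : ∀ ω ∈ Ω, bregman F F' proj q ≤ bregman F F' ω q) :
    ∀ p ∈ Ω, bregman F F' p proj + bregman F F' proj q ≤ bregman F F' p q :=
  bregman_pythagoras_general hF' hΩX hΩconv hproj hmin
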